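/- For nonnegative integers i ≥ j ≥ 1 and integers r ≥ p ≥ 0, the r-Stirling numbers of the first kind satisfy [i+r, j+r]_r = Σ_{k=j}^{i} C(k,j) [i+p, k+p]_p (r-p)^{k-j}. -/

import Mathlib

/-!
Both sides are the coefficient of `X ^ j` in `∏_{t<i} (X + r + t)`: this product is the Taylor
shift `f (X + (r - p))` of `f = ∏_{t<i} (X + p + t)`, and expanding each `(X + (r - p)) ^ k`
binomially produces the right-hand side.
-/

open Finset

/-- The unsigned `r`-Stirling numbers of the first kind: `rS1 r i j = [i+r, j+r]_r`,
characterized by `∑_j [i+r, j+r]_r x^j = (x+r)(x+r+1)⋯(x+r+i-1)`. -/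
def rS1 (r : ℕ) : ℕ → ℕ → ℕ
  | 0, 0 => 1
  | 0, _ + 1 => 0
  | i + 1, 0 => (r + i) * rS1 r i 0
  | i + 1, j + 1 => (r + i) * rS1 r i (j + 1) + rS1 r i j

open Polynomial

theorem coeff_prod_X_add_C_eq_rS1 (r i j : ℕ) :
    (∏ t ∈ range i, (X + C (r + t) : ℕ[X])).coeff j = rS1 r i j := by
  induction i generalizing j with
  | zero => cases j <;> simp [rS1, coeff_one]
  | succ i ih =>
    rw [prod_range_succ, mul_add, coeff_add, coeff_mul_C]
    cases j with
    | zero => rw [coeff_mul_X_zero, ih, rS1, zero_add, mul_comm]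
    | succ j => rw [coeff_mul_X, ih, ih, rS1, add_comm, mul_comm]

section

variable {R ι : Type*} [CommSemiring R]

theorem natDegree_prod_X_add_C [Nontrivial R] (s : Finset ι) (a : ι → R) :
    (∏ t ∈ s, (X + C (a t))).natDegree = #s := by
  rw [natDegree_prod_of_monic _ _ fun t _ => monic_X_add_C _]
  simp only [natDegree_X_add_C, sum_const, smul_eq_mul, mul_one]

theorem taylor_prod_X_add_C (d : R) (s : Finset ι) (a : ι → R) :
    taylor d (∏ t ∈ s, (X + C (a t))) = ∏ t ∈ s, (X + C (d + a t)) := by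
  rw [taylor_apply, Polynomial.prod_comp]
  refine prod_congr rfl fun t _ => ?_
  rw [add_comp, X_comp, C_comp, C_add, add_assoc]

theorem taylor_coeff_eq_sum (f : R[X]) (d : R) {n : ℕ} (hn : f.natDegree < n) (j : ℕ) :
    (taylor d f).coeff j = ∑ k ∈ range n, k.choose j * f.coeff k * d ^ (k - j) := by
  rw [taylor_coeff, hasseDeriv_apply, sum_over_range' _ (by simp) n hn, eval_finsetSum]
  simp only [eval_monomial]

end

theorem rStirlingFirst_change_of_base_general (i j r p : ℕ) (hpr : p ≤ r) :
    rS1 r i j = ∑ k ∈ Finset.Icc j i, k.choose j * rS1 p i k * (r - p) ^ (k - j) := by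
  obtain ⟨d, rfl⟩ := Nat.exists_eq_add_of_le' hpr
  have hdeg : (∏ t ∈ range i, (X + C (p + t) : ℕ[X])).natDegree < i + 1 := by
    rw [natDegree_prod_X_add_C, card_range]
    exact lt_add_one i
  rw [Nat.add_sub_cancel, ← coeff_prod_X_add_C_eq_rS1]
  simp only [add_assoc d p]
  rw [← taylor_prod_X_add_C, taylor_coeff_eq_sum _ _ hdeg]
  simp only [coeff_prod_X_add_C_eq_rS1]
  refine (sum_subset (fun k hk => ?_) fun k hk hkIcc => ?_).symm
  · simp only [mem_Icc, mem_range] at hk ⊢; omega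
  · have hkj : k < j := by simp only [mem_Icc, mem_range] at hk hkIcc; omega
    simp [Nat.choose_eq_zero_of_lt hkj]

theorem rStirlingFirst_change_of_base (i j r p : ℕ) (hj : 1 ≤ j) (hij : j ≤ i) (hpr : p ≤ r) :
    rS1 r i j = ∑ k ∈ Finset.Icc j i, k.choose j * rS1 p i k * (r - p) ^ (k - j) :=
  rStirlingFirst_change_of_base_general i j r p hpr
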